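/- Let T > 0 and let u : ℝ × [0,T) → ℝ be a classical periodic solution of the Fornberg–Whitham equation with initial value u₀(x) = u(x,0). Then for every x ∈ ℝ and every t ∈ [0,T), |u(x,t)| ≤ sup_{y∈[0,1]} |u₀(y)| + (e^t - 1) (∫_0^1 u₀(y)² dy)^{1/2}. In particular, if T < ∞ then sup over x ∈ ℝ and t ∈ [0,T) of |u(x,t)| is finite. -/

import Mathlib

open MeasureTheory

/-- The 1-periodic convolution kernel of `(id - ∂ₓ²)⁻¹` on the circle, on `[0,1)`. -/
noncomputable def FWKernel (y : ℝ) : ℝ :=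
  (Real.exp y + Real.exp (1 - y)) / (2 * (Real.exp 1 - 1))

/-- A classical periodic solution of the Fornberg–Whitham equation on `ℝ × [0,T)`:
`u` is 1-periodic in `x`, has continuous partial derivatives `ux = ∂ₓ u` and
`ut = ∂ₜ u` on `ℝ × [0,T)`, and satisfies
`∂ₜ u + (3/2) u ∂ₓ u = ∫_0^1 K(y) ∂ₓ u(x - y, t) dy`. -/
def IsClassicalFWSolution (T : ℝ) (u ux ut : ℝ → ℝ → ℝ) : Prop :=
  ContinuousOn (fun p : ℝ × ℝ => u p.1 p.2) (Set.univ ×ˢ Set.Ico 0 T) ∧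
  (∀ x : ℝ, ∀ t ∈ Set.Ico (0 : ℝ) T, u (x + 1) t = u x t) ∧
  (∀ x : ℝ, ∀ t ∈ Set.Ico (0 : ℝ) T, HasDerivAt (fun x' => u x' t) (ux x t) x) ∧
  (∀ x : ℝ, ∀ t ∈ Set.Ico (0 : ℝ) T,
    HasDerivWithinAt (fun t' => u x t') (ut x t) (Set.Ico 0 T) t) ∧
  ContinuousOn (fun p : ℝ × ℝ => ux p.1 p.2) (Set.univ ×ˢ Set.Ico 0 T) ∧
  ContinuousOn (fun p : ℝ × ℝ => ut p.1 p.2) (Set.univ ×ˢ Set.Ico 0 T) ∧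
  (∀ x : ℝ, ∀ t ∈ Set.Ico (0 : ℝ) T,
    ut x t + (3 / 2) * u x t * ux x t = ∫ y in (0:ℝ)..1, FWKernel y * ux (x - y) t)

/-!
Integrating by parts against the periodic kernel turns the nonlocal term into
`∫₀¹ K'(y) u(x - y, t) dy` with `|K'| ≤ 1/2` on `[0, 1]`, so it is at most `‖u(t)‖_{L¹}/2`.
Multiplying the equation by `u` and integrating over a period (the transport term `u² uₓ`
integrates to zero) gives `E' ≤ ‖u‖²_{L¹} ≤ E` for the energy `E = ‖u‖²_{L²}`, hence
`‖u(t)‖_{L¹} ≤ ‖u(t)‖_{L²} ≤ eᵗ ‖u₀‖_{L²}`. Finally compare `|u|` with the barrier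
`sup |u₀| + (eᵗ - 1) ‖u₀‖_{L²} + η eᵗ`: at the first time `|u|` touches it, the contact point is a
spatial extremum, so `uₓ = 0` there and `|uₜ|` equals the nonlocal term, which is smaller than the
slope of the barrier. So there is no contact, and `η → 0` gives the bound.
-/

open Set Filter Topology

noncomputable def FWKernelDeriv (y : ℝ) : ℝ :=
  (Real.exp y - Real.exp (1 - y)) / (2 * (Real.exp 1 - 1))

lemma hasDerivAt_FWKernel (y : ℝ) : HasDerivAt FWKernel (FWKernelDeriv y) y := by
  have h : HasDerivAt (fun z => Real.exp z + Real.exp (1 - z))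
      (Real.exp y - Real.exp (1 - y)) y :=
    ((Real.hasDerivAt_exp y).add ((hasDerivAt_id' y).const_sub 1).exp).congr_deriv (by ring)
  exact h.div_const _

lemma continuous_FWKernelDeriv : Continuous FWKernelDeriv := by
  unfold FWKernelDeriv; fun_prop

lemma FWKernel_one : FWKernel 1 = FWKernel 0 := by
  simp [FWKernel, add_comm]

lemma abs_FWKernelDeriv_le {y : ℝ} (hy : y ∈ Icc (0 : ℝ) 1) : |FWKernelDeriv y| ≤ 1 / 2 := by
  have h1 : 1 ≤ Real.exp y := Real.one_le_exp hy.1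
  have h2 : 1 ≤ Real.exp (1 - y) := Real.one_le_exp (by linarith [hy.2])
  have h3 : Real.exp y ≤ Real.exp 1 := Real.exp_le_exp.2 hy.2
  have h4 : Real.exp (1 - y) ≤ Real.exp 1 := Real.exp_le_exp.2 (by linarith [hy.1])
  have he : 1 < Real.exp 1 := by simp
  rw [FWKernelDeriv, abs_div, abs_of_pos (a := 2 * (Real.exp 1 - 1)) (by linarith),
    div_le_iff₀ (by linarith), abs_le]
  constructor <;> linarith

lemma sq_integral_abs_le_integral_sq {v : ℝ → ℝ} (hv : Continuous v) :
    (∫ y in (0 : ℝ)..1, |v y|) ^ 2 ≤ ∫ y in (0 : ℝ)..1, v y ^ 2 := by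
  set I := ∫ y in (0 : ℝ)..1, |v y|
  have hvar : 0 ≤ ∫ y in (0 : ℝ)..1, (|v y| - I) ^ 2 :=
    intervalIntegral.integral_nonneg zero_le_one fun y _ => sq_nonneg _
  have hexpand : (fun y => (|v y| - I) ^ 2) = fun y => v y ^ 2 - 2 * I * |v y| + I ^ 2 := by
    ext y; rw [sub_sq, sq_abs]; ring
  rw [hexpand, intervalIntegral.integral_add, intervalIntegral.integral_sub,
    intervalIntegral.integral_const_mul] at hvar
  · simp only [intervalIntegral.integral_const, sub_zero, one_smul] at hvar
    linarith
  all_goals apply Continuous.intervalIntegrable; fun_prop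

lemma integral_mul_deriv_comp_sub_of_periodic {k k' g g' : ℝ → ℝ}
    (hk : ∀ y, HasDerivAt k (k' y) y) (hk' : IntervalIntegrable k' volume 0 1)
    (hk01 : k 1 = k 0) (hg : ∀ z, HasDerivAt g (g' z) z) (hg' : Continuous g')
    (hper : Function.Periodic g 1) (x : ℝ) :
    ∫ y in (0 : ℝ)..1, k y * g' (x - y) = ∫ y in (0 : ℝ)..1, k' y * g (x - y) := by
  have hv (y : ℝ) : HasDerivAt (fun y => -g (x - y)) (g' (x - y)) y :=
    ((hg (x - y)).comp y ((hasDerivAt_id' y).const_sub x)).neg.congr_deriv (by ring)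
  rw [intervalIntegral.integral_mul_deriv_eq_deriv_mul (fun y _ => hk y) (fun y _ => hv y) hk'
    ((hg'.comp (continuous_const.sub continuous_id)).intervalIntegrable 0 1)]
  have hx : g (x - 1) = g x := by simpa using (hper (x - 1)).symm
  simp [hk01, hx, intervalIntegral.integral_neg]

lemma abs_integral_mul_comp_sub_le_of_periodic {k g : ℝ → ℝ} {C : ℝ} (hk : Continuous k)
    (hkC : ∀ y ∈ Icc (0 : ℝ) 1, |k y| ≤ C) (hg : Continuous g) (hper : Function.Periodic g 1)
    (x : ℝ) :
    |∫ y in (0 : ℝ)..1, k y * g (x - y)| ≤ C * ∫ y in (0 : ℝ)..1, |g y| := by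
  have hgx : Continuous fun y => g (x - y) := hg.comp (continuous_const.sub continuous_id)
  calc |∫ y in (0 : ℝ)..1, k y * g (x - y)|
      ≤ ∫ y in (0 : ℝ)..1, |k y * g (x - y)| :=
        intervalIntegral.abs_integral_le_integral_abs zero_le_one
    _ ≤ ∫ y in (0 : ℝ)..1, C * |g (x - y)| := by
        refine intervalIntegral.integral_mono_on zero_le_one
          ((hk.mul hgx).abs.intervalIntegrable _ _)
          ((continuous_const.mul hgx.abs).intervalIntegrable _ _) fun y hy => ?_
        rw [abs_mul]
        exact mul_le_mul_of_nonneg_right (hkC y hy) (abs_nonneg _)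
    _ = C * ∫ y in (0 : ℝ)..1, |g y| := by
        rw [intervalIntegral.integral_const_mul,
          intervalIntegral.integral_comp_sub_left (fun y => |g y|)]
        congr 1
        simpa using (hper.comp abs).intervalIntegral_add_eq (x - 1) 0

lemma integral_sq_mul_deriv_eq_zero {g g' : ℝ → ℝ} {a b : ℝ}
    (hg : ∀ z, HasDerivAt g (g' z) z) (hg' : Continuous g') (hab : g a = g b) :
    ∫ z in a..b, g z ^ 2 * g' z = 0 := by
  have hgc : Continuous g := continuous_iff_continuousAt.2 fun z => (hg z).continuousAt
  have hd : ∀ z ∈ uIcc a b, HasDerivAt (fun z => g z ^ 3 / 3) (g z ^ 2 * g' z) z :=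
    fun z _ => (((hg z).pow 3).div_const 3).congr_deriv (by push_cast; ring)
  rw [intervalIntegral.integral_eq_sub_of_hasDerivAt hd
    (((hgc.pow 2).mul hg').intervalIntegrable _ _), hab, sub_self]

lemma HasDerivAt.nonneg_of_le_left {g : ℝ → ℝ} {e a c : ℝ} (hd : HasDerivAt g e c)
    (hac : a < c) (hle : ∀ s ∈ Ioo a c, g s ≤ g c) : 0 ≤ e := by
  have hslope : Tendsto (slope g c) (𝓝[<] c) (𝓝 e) :=
    (hasDerivAt_iff_tendsto_slope.1 hd).mono_left (nhdsLT_le_nhdsNE c)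
  refine ge_of_tendsto hslope ?_
  filter_upwards [Ioo_mem_nhdsLT hac] with s hs
  rw [slope_def_field]
  exact div_nonneg_of_nonpos (sub_nonpos.2 (hle s hs)) (sub_nonpos.2 hs.2.le)

lemma HasDerivAt.eq_zero_of_forall_abs_le {g : ℝ → ℝ} {d x : ℝ} (hd : HasDerivAt g d x)
    (hmax : ∀ y, |g y| ≤ |g x|) : d = 0 := by
  rcases le_or_gt 0 (g x) with hx | hx
  · refine IsLocalMax.hasDerivAt_eq_zero (Eventually.of_forall fun y => ?_) hd
    exact (le_abs_self _).trans ((hmax y).trans (abs_of_nonneg hx).le)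
  · refine IsLocalMin.hasDerivAt_eq_zero (Eventually.of_forall fun y => ?_) hd
    have := hmax y
    rw [abs_of_neg hx] at this
    linarith [neg_abs_le (g y)]

lemma continuous_apply_of_continuousOn_univ_prod {v : ℝ → ℝ → ℝ} {S : Set ℝ}
    (hv : ContinuousOn (fun p : ℝ × ℝ => v p.1 p.2) (univ ×ˢ S)) {t : ℝ} (ht : t ∈ S) :
    Continuous fun x => v x t :=
  hv.comp_continuous (continuous_id.prodMk continuous_const) fun _ => ⟨trivial, ht⟩

lemma continuousOn_intervalIntegral_of_continuousOn_univ_prod {F : ℝ → ℝ → ℝ} {S : Set ℝ}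
    (hF : ContinuousOn (fun p : ℝ × ℝ => F p.1 p.2) (univ ×ˢ S)) (a b : ℝ) :
    ContinuousOn (fun t => ∫ y in a..b, F y t) S := by
  rw [continuousOn_iff_continuous_domRestrict]
  exact intervalIntegral.continuous_parametric_intervalIntegral_of_continuous'
    (f := fun (t : S) y => F y t)
    (hF.comp_continuous (continuous_snd.prodMk (continuous_subtype_val.comp continuous_fst))
      fun p => ⟨trivial, p.1.2⟩) a b

lemma hasDerivAt_intervalIntegral_of_continuousOn {F F' : ℝ → ℝ → ℝ} {a b t₀ δ : ℝ}
    (hδ : 0 < δ)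
    (hF : ContinuousOn (fun p : ℝ × ℝ => F p.1 p.2) (uIcc a b ×ˢ Icc (t₀ - δ) (t₀ + δ)))
    (hF' : ContinuousOn (fun p : ℝ × ℝ => F' p.1 p.2) (uIcc a b ×ˢ Icc (t₀ - δ) (t₀ + δ)))
    (hderiv : ∀ y ∈ uIcc a b, ∀ t ∈ Ioo (t₀ - δ) (t₀ + δ), HasDerivAt (F y) (F' y t) t) :
    HasDerivAt (fun t => ∫ y in a..b, F y t) (∫ y in a..b, F' y t₀) t₀ := by
  have hslice {G : ℝ → ℝ → ℝ}
      (hG : ContinuousOn (fun p : ℝ × ℝ => G p.1 p.2) (uIcc a b ×ˢ Icc (t₀ - δ) (t₀ + δ)))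
      {t : ℝ} (ht : t ∈ Icc (t₀ - δ) (t₀ + δ)) : IntervalIntegrable (G · t) volume a b :=
    (hG.comp (continuous_id.prodMk continuous_const).continuousOn
      fun _ hy => ⟨hy, ht⟩).intervalIntegrable
  have hlo : t₀ - δ < t₀ := by linarith
  have hhi : t₀ < t₀ + δ := by linarith
  obtain ⟨C, hC⟩ := (isCompact_uIcc.prod isCompact_Icc).exists_bound_of_continuousOn hF'
  refine (intervalIntegral.hasDerivAt_integral_of_dominated_loc_of_deriv_le
    (F := fun t y => F y t) (F' := fun t y => F' y t) (bound := fun _ => C)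
    (Ioo_mem_nhds hlo hhi) ?_ (hslice hF ⟨hlo.le, hhi.le⟩)
    (hslice hF' ⟨hlo.le, hhi.le⟩).def'.aestronglyMeasurable ?_ intervalIntegrable_const ?_).2
  · filter_upwards [Icc_mem_nhds hlo hhi] with t ht
    exact (hslice hF ht).def'.aestronglyMeasurable
  · refine Eventually.of_forall fun y hy t ht => hC (y, t) ⟨uIoc_subset_uIcc hy, ?_⟩
    exact Ioo_subset_Icc_self ht
  · exact Eventually.of_forall fun y hy t ht => hderiv y (uIoc_subset_uIcc hy) t ht

lemma exists_first_contact {α : Type*} [TopologicalSpace α] {K : Set α} (hK : IsCompact K)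
    {f : α → ℝ → ℝ} {B : ℝ → ℝ} {t₁ : ℝ}
    (hf : ContinuousOn (fun p : α × ℝ => f p.1 p.2) (K ×ˢ Icc 0 t₁))
    (hB : ContinuousOn B (Icc 0 t₁)) (ht₁ : 0 ≤ t₁) {x₁ : α} (hx₁ : x₁ ∈ K)
    (hcontact : B t₁ ≤ |f x₁ t₁|) :
    ∃ x ∈ K, ∃ c ∈ Icc 0 t₁, B c ≤ |f x c| ∧ ∀ y ∈ K, ∀ s ∈ Ico 0 c, |f y s| < B s := by
  have hP : IsCompact
      ((K ×ˢ Icc 0 t₁) ∩ (fun p : α × ℝ => |f p.1 p.2| - B p.2) ⁻¹' Ici 0) :=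
    (hf.abs.sub (hB.comp continuous_snd.continuousOn fun _ hp => hp.2)).upperSemicontinuousOn
      |>.isCompact_inter_preimage_Ici (hK.prod isCompact_Icc) 0
  obtain ⟨⟨x, c⟩, ⟨⟨hx, hc⟩, hxc⟩, hmin⟩ := hP.exists_isMinOn
    ⟨(x₁, t₁), ⟨hx₁, ht₁, le_rfl⟩, sub_nonneg.2 hcontact⟩ continuous_snd.continuousOn
  refine ⟨x, hx, c, hc, sub_nonneg.1 hxc, fun y hy s hs => ?_⟩
  by_contra! h
  exact hs.2.not_ge (isMinOn_iff.1 hmin (y, s) ⟨⟨hy, hs.1, hs.2.le.trans hc.2⟩, sub_nonneg.2 h⟩)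

lemma abs_lt_of_abs_deriv_lt_at_contact {α : Type*} [TopologicalSpace α] {K : Set α}
    (hK : IsCompact K) {f : α → ℝ → ℝ} {B B' : ℝ → ℝ} {T : ℝ}
    (hf : ContinuousOn (fun p : α × ℝ => f p.1 p.2) (K ×ˢ Ico 0 T))
    (hB : ContinuousOn B (Ico 0 T)) (hB' : ∀ t ∈ Ioo 0 T, HasDerivAt B (B' t) t)
    (h0 : ∀ x ∈ K, |f x 0| < B 0)
    (hcontact : ∀ x ∈ K, ∀ t ∈ Ioo 0 T, |f x t| = B t → (∀ y ∈ K, |f y t| ≤ B t) →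
      ∃ d, HasDerivAt (f x) d t ∧ |d| < B' t) :
    ∀ x ∈ K, ∀ t ∈ Ico 0 T, |f x t| < B t := by
  intro x₁ hx₁ t₁ ht₁
  by_contra! hbad
  have hsub : Icc 0 t₁ ⊆ Ico 0 T := Icc_subset_Ico_right ht₁.2
  obtain ⟨x, hx, c, hc, hxc, hbefore⟩ := exists_first_contact hK
    (hf.mono (prod_mono le_rfl hsub)) (hB.mono hsub) ht₁.1 hx₁ hbad
  have hcT : c ∈ Ico 0 T := hsub hc
  have hc0 : 0 < c := hc.1.lt_of_ne fun h => (h0 x hx).not_ge (h ▸ hxc)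
  have hleft (y) (hy : y ∈ K) : ContinuousWithinAt (f y) (Ico 0 c) c :=
    ((hf.comp (continuous_const.prodMk continuous_id).continuousOn fun _ hs => ⟨hy, hs⟩) c
      hcT).mono (Ico_subset_Ico_right hcT.2.le)
  have hle (y) (hy : y ∈ K) : |f y c| ≤ B c :=
    ContinuousWithinAt.closure_le (by rw [closure_Ico hc0.ne]; exact ⟨hc.1, le_rfl⟩)
      (hleft y hy).abs ((hB c hcT).mono (Ico_subset_Ico_right hcT.2.le))
      fun s hs => (hbefore y hy s hs).le
  have heq : |f x c| = B c := le_antisymm (hle x hx) hxc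
  obtain ⟨d, hd, hdB⟩ := hcontact x hx c ⟨hc0, hcT.2⟩ heq hle
  obtain ⟨σ, hσ, hσc⟩ : ∃ σ : ℝ, |σ| = 1 ∧ σ * f x c = |f x c| := by
    rcases le_or_gt 0 (f x c) with h | h
    · exact ⟨1, abs_one, by rw [one_mul, abs_of_nonneg h]⟩
    · exact ⟨-1, by simp, by rw [neg_one_mul, abs_of_neg h]⟩
  have hσle (z : ℝ) : σ * z ≤ |z| := (le_abs_self _).trans (by rw [abs_mul, hσ, one_mul])
  -- `σ f(x, ·) - B` vanishes at `c` and is negative just before, so its derivative is `≥ 0`.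
  have hderiv := ((hd.const_mul σ).sub (hB' c ⟨hc0, hcT.2⟩)).nonneg_of_le_left hc0
    fun s hs => by
      simp only [Pi.sub_apply]
      rw [hσc, heq, sub_self]
      linarith [hσle (f x s), hbefore x hx s (Ioo_subset_Ico_self hs)]
  linarith [hσle d]

noncomputable def FWEnergy (u : ℝ → ℝ → ℝ) (t : ℝ) : ℝ :=
  ∫ y in (0 : ℝ)..1, u y t ^ 2

lemma FWEnergy_nonneg (u : ℝ → ℝ → ℝ) (t : ℝ) : 0 ≤ FWEnergy u t :=
  intervalIntegral.integral_nonneg zero_le_one fun _ _ => sq_nonneg _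

namespace IsClassicalFWSolution

variable {T : ℝ} {u ux ut : ℝ → ℝ → ℝ} {t : ℝ}

lemma periodic (hu : IsClassicalFWSolution T u ux ut) (ht : t ∈ Ico 0 T) :
    Function.Periodic (fun x => u x t) 1 :=
  fun x => hu.2.1 x t ht

lemma nonlocal_eq (hu : IsClassicalFWSolution T u ux ut) (ht : t ∈ Ico 0 T) (x : ℝ) :
    ut x t + 3 / 2 * u x t * ux x t = ∫ y in (0 : ℝ)..1, FWKernelDeriv y * u (x - y) t := by
  have hper := hu.periodic ht
  obtain ⟨-, -, hux, -, hcx, -, heq⟩ := hu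
  rw [heq x t ht]
  exact integral_mul_deriv_comp_sub_of_periodic hasDerivAt_FWKernel
    (continuous_FWKernelDeriv.intervalIntegrable 0 1) FWKernel_one (fun z => hux z t ht)
    (continuous_apply_of_continuousOn_univ_prod hcx ht) hper x

lemma abs_nonlocal_le (hu : IsClassicalFWSolution T u ux ut) (ht : t ∈ Ico 0 T) (x : ℝ) :
    |ut x t + 3 / 2 * u x t * ux x t| ≤ 1 / 2 * ∫ y in (0 : ℝ)..1, |u y t| := by
  rw [hu.nonlocal_eq ht x]
  exact abs_integral_mul_comp_sub_le_of_periodic continuous_FWKernelDeriv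
    (fun _ hy => abs_FWKernelDeriv_le hy) (continuous_apply_of_continuousOn_univ_prod hu.1 ht)
    (hu.periodic ht) x

lemma continuousOn_energy (hu : IsClassicalFWSolution T u ux ut) :
    ContinuousOn (FWEnergy u) (Ico 0 T) :=
  continuousOn_intervalIntegral_of_continuousOn_univ_prod (F := fun y t => u y t ^ 2)
    (hu.1.pow 2) 0 1

lemma hasDerivAt_energy (hu : IsClassicalFWSolution T u ux ut) (ht : t ∈ Ioo 0 T) :
    HasDerivAt (FWEnergy u) (∫ y in (0 : ℝ)..1, 2 * u y t * ut y t) t := by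
  obtain ⟨hc, -, -, hut, -, hct, -⟩ := hu
  obtain ⟨δ, hδ, hsub⟩ := Metric.nhds_basis_closedBall.mem_iff.1 (Ioo_mem_nhds ht.1 ht.2)
  rw [Real.closedBall_eq_Icc] at hsub
  have hsub' : uIcc (0 : ℝ) 1 ×ˢ Icc (t - δ) (t + δ) ⊆ univ ×ˢ Ico 0 T :=
    prod_mono (subset_univ _) (hsub.trans Ioo_subset_Ico_self)
  refine hasDerivAt_intervalIntegral_of_continuousOn (F := fun y t => u y t ^ 2)
    (F' := fun y t => 2 * u y t * ut y t) hδ ((hc.mono hsub').pow 2)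
    (((continuousOn_const.mul hc).mul hct).mono hsub') fun y _ s hs => ?_
  have hs' := Ioo_subset_Icc_self.trans hsub hs
  exact (((hut y s (Ioo_subset_Ico_self hs')).hasDerivAt (Ico_mem_nhds hs'.1 hs'.2)).pow 2)
    |>.congr_deriv (by push_cast; ring)

lemma integral_mul_deriv_le_energy (hu : IsClassicalFWSolution T u ux ut)
    (ht : t ∈ Ico 0 T) : ∫ y in (0 : ℝ)..1, 2 * u y t * ut y t ≤ FWEnergy u t := by
  obtain ⟨hc, -, hux, -, hcx, hct, -⟩ := id hu
  have hu_t := continuous_apply_of_continuousOn_univ_prod hc ht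
  have hux_t := continuous_apply_of_continuousOn_univ_prod hcx ht
  have hut_t := continuous_apply_of_continuousOn_univ_prod hct ht
  set I := ∫ y in (0 : ℝ)..1, |u y t|
  have hcube : ∫ y in (0 : ℝ)..1, u y t ^ 2 * ux y t = 0 :=
    integral_sq_mul_deriv_eq_zero (fun z => hux z t ht) hux_t
      (by simpa using (hu.periodic ht 0).symm)
  calc ∫ y in (0 : ℝ)..1, 2 * u y t * ut y t
      = ∫ y in (0 : ℝ)..1, (2 * u y t * (ut y t + 3 / 2 * u y t * ux y t)
          - 3 * (u y t ^ 2 * ux y t)) := by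
        congr 1; ext y; ring
    _ = ∫ y in (0 : ℝ)..1, 2 * u y t * (ut y t + 3 / 2 * u y t * ux y t) := by
        rw [intervalIntegral.integral_sub, intervalIntegral.integral_const_mul, hcube, mul_zero,
          sub_zero]
        all_goals apply Continuous.intervalIntegrable; fun_prop
    _ ≤ ∫ y in (0 : ℝ)..1, |u y t| * I := by
        refine intervalIntegral.integral_mono_on zero_le_one
          (Continuous.intervalIntegrable (by fun_prop) _ _)
          (Continuous.intervalIntegrable (by fun_prop) _ _) fun y _ => ?_
        calc 2 * u y t * (ut y t + 3 / 2 * u y t * ux y t)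
            ≤ 2 * (|u y t| * |ut y t + 3 / 2 * u y t * ux y t|) := by
              rw [← abs_mul, mul_assoc]
              exact mul_le_mul_of_nonneg_left (le_abs_self _) zero_le_two
          _ ≤ 2 * (|u y t| * (1 / 2 * I)) := by
              gcongr
              exact hu.abs_nonlocal_le ht y
          _ = |u y t| * I := by ring
    _ = I ^ 2 := by rw [intervalIntegral.integral_mul_const]; ring
    _ ≤ FWEnergy u t := sq_integral_abs_le_integral_sq hu_t

lemma energy_le (hu : IsClassicalFWSolution T u ux ut) (ht : t ∈ Ico 0 T) :
    FWEnergy u t ≤ Real.exp t * FWEnergy u 0 := by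
  have hderiv (s : ℝ) (hs : s ∈ Ioo 0 T) :
      HasDerivAt (fun s => Real.exp (-s) * FWEnergy u s)
        (Real.exp (-s) * ((∫ y in (0 : ℝ)..1, 2 * u y s * ut y s) - FWEnergy u s)) s :=
    ((hasDerivAt_neg s).exp.mul (hu.hasDerivAt_energy hs)).congr_deriv (by ring)
  have hanti : AntitoneOn (fun s => Real.exp (-s) * FWEnergy u s) (Ico 0 T) := by
    refine antitoneOn_of_deriv_nonpos (convex_Ico 0 T)
      ((Real.continuous_exp.comp continuous_neg).continuousOn.mul hu.continuousOn_energy) ?_ ?_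
    all_goals rw [interior_Ico]
    · exact fun s hs => (hderiv s hs).differentiableAt.differentiableWithinAt
    · intro s hs
      rw [(hderiv s hs).deriv]
      exact mul_nonpos_of_nonneg_of_nonpos (Real.exp_pos _).le
        (sub_nonpos.2 (hu.integral_mul_deriv_le_energy (Ioo_subset_Ico_self hs)))
  have h := hanti ⟨le_rfl, ht.1.trans_lt ht.2⟩ ht ht.1
  simp only at h
  rwa [neg_zero, Real.exp_zero, one_mul, Real.exp_neg, inv_mul_le_iff₀ (Real.exp_pos t)] at h

lemma integral_abs_le (hu : IsClassicalFWSolution T u ux ut) (ht : t ∈ Ico 0 T) :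
    ∫ y in (0 : ℝ)..1, |u y t| ≤ Real.exp t * √(FWEnergy u 0) := by
  have hI : 0 ≤ ∫ y in (0 : ℝ)..1, |u y t| :=
    intervalIntegral.integral_nonneg zero_le_one fun _ _ => abs_nonneg _
  rw [← pow_le_pow_iff_left₀ hI (by positivity) two_ne_zero, mul_pow,
    Real.sq_sqrt (FWEnergy_nonneg u 0)]
  calc (∫ y in (0 : ℝ)..1, |u y t|) ^ 2
      ≤ FWEnergy u t :=
        sq_integral_abs_le_integral_sq (continuous_apply_of_continuousOn_univ_prod hu.1 ht)
    _ ≤ Real.exp t * FWEnergy u 0 := hu.energy_le ht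
    _ ≤ Real.exp t ^ 2 * FWEnergy u 0 :=
        mul_le_mul_of_nonneg_right (le_self_pow₀ (Real.one_le_exp ht.1) two_ne_zero)
          (FWEnergy_nonneg u 0)

lemma abs_lt_barrier (hu : IsClassicalFWSolution T u ux ut) {η : ℝ} (hη : 0 < η) {x : ℝ}
    (hx : x ∈ Icc (0 : ℝ) 1) (ht : t ∈ Ico 0 T) :
    |u x t| < sSup ((fun y => |u y 0|) '' Icc (0 : ℝ) 1)
      + (Real.exp t - 1) * √(FWEnergy u 0) + η * Real.exp t := by
  set M₀ := sSup ((fun y => |u y 0|) '' Icc (0 : ℝ) 1)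
  set R := √(FWEnergy u 0)
  obtain ⟨hc, -, hux, hut, -, -, -⟩ := id hu
  have h0T : (0 : ℝ) ∈ Ico 0 T := ⟨le_rfl, ht.1.trans_lt ht.2⟩
  have hM₀ : BddAbove ((fun y => |u y 0|) '' Icc (0 : ℝ) 1) :=
    (isCompact_Icc.image_of_continuousOn
      (continuous_apply_of_continuousOn_univ_prod hc h0T).abs.continuousOn).bddAbove
  refine abs_lt_of_abs_deriv_lt_at_contact (B := fun s => M₀ + (Real.exp s - 1) * R + η * Real.exp s)
    (B' := fun s => Real.exp s * (R + η)) isCompact_Icc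
    (hc.mono (prod_mono (subset_univ _) subset_rfl)) (by fun_prop) (fun s _ => ?_)
    (fun y hy => ?_) (fun y hy c hc hyc hmax => ?_) x hx t ht
  · exact ((((Real.hasDerivAt_exp s).sub_const 1).mul_const R).const_add M₀).add
      ((Real.hasDerivAt_exp s).const_mul η) |>.congr_deriv (by ring)
  · have := le_csSup hM₀ (mem_image_of_mem _ hy)
    simp only [Real.exp_zero, sub_self, zero_mul, add_zero, mul_one]
    linarith
  · have hc' : c ∈ Ico 0 T := Ioo_subset_Ico_self hc
    have hmax' (z : ℝ) : |u z c| ≤ |u y c| := by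
      obtain ⟨z', hz', hzz'⟩ := (hu.periodic hc').exists_mem_Ico₀ one_pos z
      rw [hzz', hyc]
      exact hmax z' (Ico_subset_Icc_self hz')
    have hux0 : ux y c = 0 := (hux y c hc').eq_zero_of_forall_abs_le hmax'
    refine ⟨ut y c, (hut y c hc').hasDerivAt (Ico_mem_nhds hc.1 hc.2), ?_⟩
    have hR : 0 ≤ Real.exp c * R := by positivity
    have hη' : 0 < Real.exp c * η := by positivity
    calc |ut y c| = |ut y c + 3 / 2 * u y c * ux y c| := by rw [hux0, mul_zero, add_zero]
      _ ≤ 1 / 2 * ∫ z in (0 : ℝ)..1, |u z c| := hu.abs_nonlocal_le hc' y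
      _ ≤ 1 / 2 * (Real.exp c * R) := by gcongr; exact hu.integral_abs_le hc'
      _ < Real.exp c * (R + η) := by linarith

lemma abs_le_sSup_add (hu : IsClassicalFWSolution T u ux ut) (x : ℝ) (ht : t ∈ Ico 0 T) :
    |u x t| ≤ sSup ((fun y => |u y 0|) '' Icc (0 : ℝ) 1)
      + (Real.exp t - 1) * √(FWEnergy u 0) := by
  obtain ⟨y, hy, hxy⟩ := (hu.periodic ht).exists_mem_Ico₀ one_pos x
  rw [hxy]
  refine le_of_forall_pos_lt_add fun ε hε => ?_
  have h := hu.abs_lt_barrier (div_pos hε (Real.exp_pos t)) (Ico_subset_Icc_self hy) ht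
  rwa [div_mul_cancel₀ _ (Real.exp_pos t).ne'] at h

end IsClassicalFWSolution

theorem fw_Linfty_bound_general (T : ℝ) (u ux ut : ℝ → ℝ → ℝ)
    (hu : IsClassicalFWSolution T u ux ut) :
    (∀ x : ℝ, ∀ t ∈ Set.Ico (0 : ℝ) T,
      |u x t| ≤ sSup ((fun y => |u y 0|) '' Set.Icc (0 : ℝ) 1)
        + (Real.exp t - 1) * Real.sqrt (∫ y in (0:ℝ)..1, (u y 0) ^ 2)) ∧
    ∃ C : ℝ, ∀ x : ℝ, ∀ t ∈ Set.Ico (0 : ℝ) T, |u x t| ≤ C := by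
  refine ⟨fun x t ht => hu.abs_le_sSup_add x ht, sSup ((fun y => |u y 0|) '' Icc (0 : ℝ) 1)
    + (Real.exp T - 1) * √(FWEnergy u 0), fun x t ht => (hu.abs_le_sSup_add x ht).trans ?_⟩
  gcongr
  exact ht.2.le

/-- L∞ bound for classical periodic Fornberg–Whitham solutions:
`|u(x,t)| ≤ sup_{y ∈ [0,1]} |u(y,0)| + (e^t - 1) (∫_0^1 u(y,0)² dy)^{1/2}`; in
particular the solution is bounded on `ℝ × [0,T)`. -/
theorem fw_Linfty_bound (T : ℝ) (hT : 0 < T) (u ux ut : ℝ → ℝ → ℝ)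
    (hu : IsClassicalFWSolution T u ux ut) :
    (∀ x : ℝ, ∀ t ∈ Set.Ico (0 : ℝ) T,
      |u x t| ≤ sSup ((fun y => |u y 0|) '' Set.Icc (0 : ℝ) 1)
        + (Real.exp t - 1) * Real.sqrt (∫ y in (0:ℝ)..1, (u y 0) ^ 2)) ∧
    ∃ C : ℝ, ∀ x : ℝ, ∀ t ∈ Set.Ico (0 : ℝ) T, |u x t| ≤ C :=
  fw_Linfty_bound_general T u ux ut hu
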